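/- If C is a clopen subset of M*, then there is a clopen subset B of ℕ* such that C = (π*)⁻¹[B]. Consequently the clopen subsets of M* are exactly the preimages under π* of clopen subsets of ℕ*. -/

import Mathlib

open scoped unitInterval

noncomputable section

abbrev Mspace : Type := ℕ × I

def betaPi : StoneCech Mspace → Ultrafilter ℕ :=
  stoneCechExtend (continuous_of_discreteTopology.comp continuous_fst :
    Continuous fun p : Mspace => (pure p.1 : Ultrafilter ℕ))

def Mstar : Set (StoneCech Mspace) := (Set.range (stoneCechUnit : Mspace → StoneCech Mspace))ᶜ

def Nstar : Set (Ultrafilter ℕ) := (Set.range (pure : ℕ → Ultrafilter ℕ))ᶜ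

/-!
Write `π = betaPi`. It pulls the basic clopen set `{u | S ∈ u}` back to the closure of the slab
`S × I`; as the slabs `{n} × I` are compact, `M* = π⁻¹(ℕ*)`. Given a clopen `C ⊆ M*`, separate
`C` and `M* \ C` by disjoint open sets `U` and `V`. The compact set `(U ∪ V)ᶜ` lies in `ℕ × I`,
so it meets only finitely many slabs, and every other slab, being connected, lies in `U` or in
`V`. For `p ∈ M*` the nonprincipal ultrafilter `π p` contains no finite set, hence contains the
set `A` of those `n` whose slab lies in `U` or the set of those whose slab lies in `V`; so `p`
is in the closure of `U` or of `V`, and `p ∈ C ↔ A ∈ π p`.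
-/

open Set

lemma IsClosed.isClosed_and_isClosed_diff {X : Type*} [TopologicalSpace X] {K C : Set X}
    (hK : IsClosed K) (hCK : C ⊆ K) (hC : IsClopen ((↑) ⁻¹' C : Set K)) :
    IsClosed C ∧ IsClosed (K \ C) := by
  constructor
  · simpa [Subtype.image_preimage_coe, inter_eq_right.2 hCK] using hC.isClosed.trans hK
  · simpa [image_compl_preimage] using hC.isOpen.isClosed_compl.trans hK

namespace Ultrafilter

variable {α : Type*}

lemma isOpen_range_pure : IsOpen (range (pure : α → Ultrafilter α)) := by
  have : range (pure : α → Ultrafilter α) = ⋃ a, {u | {a} ∈ u} := by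
    ext u
    simp only [mem_range, mem_iUnion, mem_ofPred_eq]
    constructor
    · rintro ⟨a, rfl⟩
      exact ⟨a, mem_pure.2 rfl⟩
    · rintro ⟨a, ha⟩
      obtain ⟨x, rfl, hu⟩ := eq_pure_of_finite_mem (finite_singleton a) ha
      exact ⟨x, hu.symm⟩
  rw [this]
  exact isOpen_iUnion fun a => ultrafilter_isOpen_basic _

lemma compl_mem_of_notMem_range_pure {u : Ultrafilter α} (hu : u ∉ range pure) {s : Set α}
    (hs : s.Finite) : sᶜ ∈ u :=
  u.le_cofinite_or_eq_pure.resolve_right (fun ⟨a, ha⟩ => hu ⟨a, ha.symm⟩) hs.compl_mem_cofinite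

lemma finite_preimage_pure_of_isCompact {L : Set (Ultrafilter α)} (hL : IsCompact L)
    (hLr : L ⊆ range pure) : (pure ⁻¹' L : Set α).Finite := by
  obtain ⟨t, ht⟩ := hL.elim_finite_subcover (fun a : α => {u : Ultrafilter α | {a} ∈ u})
    (fun _ => ultrafilter_isOpen_basic _) fun u hu => by
      obtain ⟨a, rfl⟩ := hLr hu
      exact mem_iUnion.2 ⟨a, mem_pure.2 rfl⟩
  refine t.finite_toSet.subset fun a ha => ?_
  obtain ⟨b, hb, hab⟩ := mem_iUnion₂.1 (ht ha)
  rwa [← mem_singleton_iff.1 (mem_pure.1 hab)] at hb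

end Ultrafilter

section StoneCechExtend

variable {X α : Type*} [TopologicalSpace X] {f : X → α}
  (hf : Continuous fun x => (pure (f x) : Ultrafilter α))

lemma preimage_stoneCechExtend_setOf_mem (s : Set α) :
    stoneCechExtend hf ⁻¹' {u | s ∈ u} = closure (stoneCechUnit '' (f ⁻¹' s)) := by
  have hsub (t : Set α) :
      closure (stoneCechUnit '' (f ⁻¹' t)) ⊆ stoneCechExtend hf ⁻¹' {u | t ∈ u} :=
    closure_minimal (by rintro _ ⟨x, hx, rfl⟩; simpa [stoneCechExtend_stoneCechUnit] using hx)
      ((ultrafilter_isClosed_basic t).preimage (continuous_stoneCechExtend hf))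
  refine Subset.antisymm (fun p hp => ?_) (hsub s)
  have hcover : closure (stoneCechUnit '' (f ⁻¹' s)) ∪ closure (stoneCechUnit '' (f ⁻¹' sᶜ)) =
      univ := by
    rw [← closure_union, ← image_union, ← preimage_union, union_compl_self, preimage_univ,
      image_univ, denseRange_stoneCechUnit.closure_range]
  rcases hcover ▸ mem_univ p with h | h
  · exact h
  · exact absurd (hsub sᶜ h) ((stoneCechExtend hf p).compl_notMem hp)

lemma preimage_stoneCechExtend_range_pure (hcomp : ∀ a, IsCompact (f ⁻¹' {a})) :
    stoneCechExtend hf ⁻¹' range pure = range stoneCechUnit := by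
  refine Subset.antisymm ?_ ?_
  · rintro p ⟨a, ha⟩
    have hp : p ∈ stoneCechExtend hf ⁻¹' {u | {a} ∈ u} := by
      simp [← ha, Ultrafilter.mem_pure]
    rw [preimage_stoneCechExtend_setOf_mem,
      ((hcomp a).image continuous_stoneCechUnit).isClosed.closure_eq] at hp
    exact image_subset_range _ _ hp
  · rintro _ ⟨x, rfl⟩
    exact ⟨f x, (stoneCechExtend_stoneCechUnit hf x).symm⟩

lemma finite_image_preimage_stoneCechUnit {K : Set (StoneCech X)} (hK : IsClosed K)
    (hKr : K ⊆ stoneCechExtend hf ⁻¹' range pure) : (f '' (stoneCechUnit ⁻¹' K)).Finite := by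
  refine (Ultrafilter.finite_preimage_pure_of_isCompact
    (hK.isCompact.image (continuous_stoneCechExtend hf)) (image_subset_iff.2 hKr)).subset ?_
  rintro _ ⟨x, hx, rfl⟩
  exact ⟨stoneCechUnit x, hx, stoneCechExtend_stoneCechUnit hf x⟩

theorem exists_forall_mem_iff_mem_stoneCechExtend (hconn : ∀ a, IsPreconnected (f ⁻¹' {a}))
    {C : Set (StoneCech X)} (hC : IsClosed C)
    (hD : IsClosed (stoneCechExtend hf ⁻¹' (range pure)ᶜ \ C)) :
    ∃ A : Set α, ∀ p, stoneCechExtend hf p ∉ range pure → (p ∈ C ↔ A ∈ stoneCechExtend hf p) := by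
  obtain ⟨U, V, hU, hV, hCU, hDV, hUV⟩ :=
    SeparatedNhds.of_isCompact_isCompact hC.isCompact hD.isCompact disjoint_sdiff_right
  have hrem (p) (hp : stoneCechExtend hf p ∉ range pure) : p ∈ U ∪ V := by
    by_cases hpC : p ∈ C
    exacts [Or.inl (hCU hpC), Or.inr (hDV ⟨hp, hpC⟩)]
  set bad := f '' (stoneCechUnit ⁻¹' (U ∪ V)ᶜ)
  have hbad : bad.Finite := finite_image_preimage_stoneCechUnit hf (hU.union hV).isClosed_compl
    fun p hp => not_not.1 fun h => hp (hrem p h)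
  let fibersIn (W : Set (StoneCech X)) : Set α := {a | f ⁻¹' {a} ⊆ stoneCechUnit ⁻¹' W}
  have hcover : badᶜ ⊆ fibersIn U ∪ fibersIn V := fun a ha =>
    (hconn a).subset_or_subset (hU.preimage continuous_stoneCechUnit)
      (hV.preimage continuous_stoneCechUnit) (hUV.preimage _)
      fun x hx => not_not.1 fun h => ha ⟨x, h, hx⟩
  have hclosure (W) (p) (hp : fibersIn W ∈ stoneCechExtend hf p) : p ∈ closure W := by
    have hp' : p ∈ stoneCechExtend hf ⁻¹' {u | fibersIn W ∈ u} := hp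
    rw [preimage_stoneCechExtend_setOf_mem] at hp'
    exact closure_mono (by rintro _ ⟨x, hx, rfl⟩; exact hx rfl) hp'
  refine ⟨fibersIn U, fun p hp => ⟨fun hpC => ?_, fun hpU => ?_⟩⟩
  · have hUV' : fibersIn U ∪ fibersIn V ∈ stoneCechExtend hf p :=
      Filter.mem_of_superset (Ultrafilter.compl_mem_of_notMem_range_pure hp hbad) hcover
    refine (Ultrafilter.union_mem_iff.1 hUV').resolve_right fun hpV => ?_
    exact (hUV.closure_right hU).notMem_of_mem_left (hCU hpC) (hclosure V p hpV)
  · by_contra hpC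
    exact (hUV.closure_left hV).notMem_of_mem_left (hclosure U p hpU) (hDV ⟨hp, hpC⟩)

end StoneCechExtend

lemma continuous_pure_fst :
    Continuous fun p : Mspace => (pure p.1 : Ultrafilter ℕ) :=
  continuous_of_discreteTopology.comp continuous_fst

lemma continuous_betaPi : Continuous betaPi := continuous_stoneCechExtend continuous_pure_fst

lemma Mstar_eq_preimage_betaPi : Mstar = betaPi ⁻¹' Nstar := by
  rw [Mstar, Nstar, preimage_compl, ← preimage_stoneCechExtend_range_pure continuous_pure_fst
    fun n => by rw [← prod_univ]; exact isCompact_singleton.prod isCompact_univ]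
  rfl

lemma isClosed_Mstar : IsClosed Mstar :=
  Mstar_eq_preimage_betaPi ▸ Ultrafilter.isOpen_range_pure.isClosed_compl.preimage continuous_betaPi

/-- The clopen subsets of `M*` are exactly the preimages under `π*` of clopen subsets
of `ℕ*`: every clopen subset `C` of the subspace `M*` is of the form `(π*)⁻¹[B]` for a
clopen subset `B` of `ℕ*`, and conversely every such preimage is clopen. -/
theorem clopen_Mstar_iff :
    (∀ C : Set (StoneCech Mspace), C ⊆ Mstar →
      IsClopen ((↑·) ⁻¹' C : Set ↥Mstar) →
      ∃ B : Set (Ultrafilter ℕ), B ⊆ Nstar ∧ IsClopen ((↑·) ⁻¹' B : Set ↥Nstar) ∧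
        C = {p | p ∈ Mstar ∧ betaPi p ∈ B}) ∧
    (∀ B : Set (Ultrafilter ℕ), B ⊆ Nstar → IsClopen ((↑·) ⁻¹' B : Set ↥Nstar) →
      IsClopen ((↑·) ⁻¹' {p | p ∈ Mstar ∧ betaPi p ∈ B} : Set ↥Mstar)) := by
  have hM := Mstar_eq_preimage_betaPi
  refine ⟨fun C hCM hC => ?_, fun B _ hB => ?_⟩
  · obtain ⟨hCclosed, hDclosed⟩ := isClosed_Mstar.isClosed_and_isClosed_diff hCM hC
    obtain ⟨A, hA⟩ := exists_forall_mem_iff_mem_stoneCechExtend continuous_pure_fst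
      (fun n => by rw [← prod_univ]; exact isPreconnected_singleton.prod isPreconnected_univ)
      hCclosed (hM ▸ hDclosed)
    refine ⟨Nstar ∩ {u | A ∈ u}, inter_subset_left, ?_, ?_⟩
    · rw [Subtype.preimage_coe_self_inter]
      exact IsClopen.preimage ⟨ultrafilter_isClosed_basic A, ultrafilter_isOpen_basic A⟩
        continuous_subtype_val
    · ext p
      refine ⟨fun hp => ?_, fun ⟨_, hpN, hpA⟩ => (hA p hpN).2 hpA⟩
      have hpN : betaPi p ∈ Nstar := hM.subset (hCM hp)
      exact ⟨hCM hp, hpN, (hA p hpN).1 hp⟩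
  · have hMN : MapsTo betaPi Mstar Nstar := hM ▸ mapsTo_preimage betaPi Nstar
    have : ((↑·) ⁻¹' {p | p ∈ Mstar ∧ betaPi p ∈ B} : Set ↥Mstar) =
        hMN.restrict ⁻¹' ((↑·) ⁻¹' B) := by
      ext q; simp
    rw [this]
    exact hB.preimage (continuous_betaPi.restrict hMN)
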